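/- Let S ≥ 2 and N ≥ 2 be integers and let q = Σ_{k=1}^{N} Σ_{s=1}^{S} C(N,k)·ψ_s(S,k). Then q ≥ (N−1)·S^{N−1}; that is, the quantity H = q − (N−1)·S^{N−1} used in the placement phase of the proposed cache-aided MuPIR scheme is nonnegative. -/

import Mathlib

/-- Pair `(g S k, f S k)` defined by the recurrence:
`g(S,1)=1, f(S,1)=0`, and for `k ≥ 2`,
`g(S,k)=(S−1)·f(S,k−1)`, `f(S,k)=(S−2)·f(S,k−1)+g(S,k−1)`. -/
def gfAux (S : ℕ) : ℕ → ℤ × ℤ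
  | 0 => (0, 0)
  | 1 => (1, 0)
  | (k+2) => (((S : ℤ) - 1) * (gfAux S (k+1)).2,
              ((S : ℤ) - 2) * (gfAux S (k+1)).2 + (gfAux S (k+1)).1)

def g (S k : ℕ) : ℤ := (gfAux S k).1
def f (S k : ℕ) : ℤ := (gfAux S k).2

/-- `φ_s(S,k)`: `g(S,k)` if `s = 1`, else `f(S,k)`. -/
def phi (S s k : ℕ) : ℤ := if s = 1 then g S k else f S k

/-- `ψ_s(S,k) = ⌈(k(N−1)/N)·φ_s(S,k)⌉`. -/
def psi (S N s k : ℕ) : ℤ := ⌈((k : ℚ) * ((N : ℚ) - 1) / (N : ℚ)) * ((phi S s k : ℚ))⌉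

/-- `q = Σ_{k=1}^{N} Σ_{s=1}^{S} C(N,k)·ψ_s(S,k)`. -/
def qTotal (S N : ℕ) : ℤ :=
  ∑ k ∈ Finset.Icc 1 N, ∑ s ∈ Finset.Icc 1 S, (N.choose k : ℤ) * psi S N s k

/-! Summing the recurrence over `s`, the quantity `g + (S - 1) f` is multiplied by `S - 1` at each
step, so `∑ₛ φₛ(S,k) = (S - 1)^(k - 1)`. Dropping the ceilings therefore gives
`q ≥ (N - 1)/N · ∑ₖ k C(N,k) (S - 1)^(k - 1)`, and the last sum is the derivative of `(1 + x)^N`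
at `x = S - 1`, namely `N S^(N - 1)`. -/

open Finset

lemma g_add_sub_one_mul_f (S k : ℕ) :
    g S (k + 1) + ((S : ℤ) - 1) * f S (k + 1) = ((S : ℤ) - 1) ^ k := by
  induction k with
  | zero => simp [g, f, gfAux]
  | succ k ih =>
    simp only [g, f, gfAux] at ih ⊢
    linear_combination ((S : ℤ) - 1) * ih

lemma sum_Icc_phi (S k : ℕ) (hS : 1 ≤ S) :
    ∑ s ∈ Icc 1 S, phi S s k = g S k + ((S : ℤ) - 1) * f S k := by
  have hf : ∀ s ∈ Ioc 1 S, phi S s k = f S k := fun s hs =>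
    if_neg (mem_Ioc.1 hs).1.ne'
  rw [Icc_eq_cons_Ioc hS, sum_cons, sum_congr rfl hf, sum_const, Nat.card_Ioc, nsmul_eq_mul,
    Nat.cast_sub hS, phi, if_pos rfl, Nat.cast_one]

lemma sum_Icc_phi_eq_pow (S k : ℕ) (hS : 1 ≤ S) (hk : 1 ≤ k) :
    ∑ s ∈ Icc 1 S, phi S s k = ((S : ℤ) - 1) ^ (k - 1) := by
  obtain ⟨k, rfl⟩ := Nat.exists_eq_add_of_le' hk
  rw [sum_Icc_phi S _ hS, g_add_sub_one_mul_f, Nat.add_sub_cancel]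

lemma sum_Icc_mul_choose_mul_pow {R : Type*} [CommSemiring R] (n : ℕ) (x : R) :
    ∑ k ∈ Icc 1 n, (k * n.choose k : R) * x ^ (k - 1) = n * (x + 1) ^ (n - 1) := by
  cases n with
  | zero => simp
  | succ n =>
    rw [← Ico_add_one_right_eq_Icc, sum_Ico_eq_sum_range, Nat.add_sub_cancel, add_pow,
      Nat.add_sub_cancel, mul_sum]
    refine sum_congr rfl fun k _ => ?_
    rw [add_comm 1 k]
    have h := congrArg (Nat.cast : ℕ → R) (Nat.add_one_mul_choose_eq n k)
    push_cast at h
    rw [Nat.add_sub_cancel, one_pow, mul_one]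
    push_cast
    rw [mul_left_comm, h]
    ring

lemma sum_sum_choose_mul_phi_le_qTotal (S N : ℕ) :
    ∑ k ∈ Icc 1 N, ∑ s ∈ Icc 1 S,
      (N.choose k : ℚ) * ((k : ℚ) * ((N : ℚ) - 1) / N * phi S s k) ≤ qTotal S N := by
  unfold qTotal psi
  push_cast
  gcongr
  exact Int.le_ceil _

theorem H_nonneg (S N : ℕ) (hS : 2 ≤ S) (hN : 2 ≤ N) :
    ((N : ℤ) - 1) * (S : ℤ) ^ (N - 1) ≤ qTotal S N := by
  have hN0 : (N : ℚ) ≠ 0 := Nat.cast_ne_zero.2 (by omega)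
  rw [← Int.cast_le (R := ℚ)]
  calc (((N : ℤ) - 1) * (S : ℤ) ^ (N - 1) : ℤ)
      = ((N : ℚ) - 1) / N * ∑ k ∈ Icc 1 N, (k * N.choose k : ℚ) * ((S : ℚ) - 1) ^ (k - 1) := by
        rw [sum_Icc_mul_choose_mul_pow, sub_add_cancel]
        field_simp
        push_cast
        ring
    _ = ∑ k ∈ Icc 1 N, ∑ s ∈ Icc 1 S,
          (N.choose k : ℚ) * ((k : ℚ) * ((N : ℚ) - 1) / N * phi S s k) := by
        rw [mul_sum]
        refine sum_congr rfl fun k hk => ?_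
        rw [← mul_sum, ← mul_sum, ← Int.cast_sum,
          sum_Icc_phi_eq_pow S k (by omega) (mem_Icc.1 hk).1]
        push_cast
        ring
    _ ≤ qTotal S N := sum_sum_choose_mul_phi_le_qTotal S N
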